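/- Assume s ≥ 2. Let δ_1 ∈ ℂ[x,y] with Supp(δ_1) ⊆ N_1 \ {(0, e_1)}, set f_1 = y^{e_1} + δ_1, and assume ι_1^* f_1 = 0. Then for every j = 2, …, s: ϑ_{ι_j}(f_1) = γ_2^{(j)} and ϑ_{ι_j}(∂f_1/∂y) = γ_2^{(j)} − e_jλ_2. -/

import Mathlib

/-
Write `F = y^{e₁} + δ` and `P = e₁λ₁`. Minimality of `k₁ = e₁` makes `e₁` and `P` coprime, so
every monomial `x^α y^β` of `δ` lies on or above the Newton edge `e₁α + Pβ = e₁P`, and strictly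
above it when `β > 0`: lattice points of the edge have `e₁ ∣ β`, and the only one with `β > 0`
is `(0, e₁)`, which `δ` avoids.

With `e_j = m e₁`, the truncation is `y_j(t) = y₁(t^m) + r(t)`, where `r` has initial term
`c₂ t^{e_jλ₂}` and `e_jλ₂ > mP`. Taylor-expand `F(t^{e_j}, y₁(t^m) + r)` in powers of `r`: the
constant term is `(ι₁^*F)(t^m) = 0`; in the linear term `∂F/∂y(t^{e_j}, y₁(t^m)) · r` only
`e₁ y^{e₁-1}` reaches the lowest order, which gives the initial term
`e₁ c₁^{e₁-1} c₂ t^{(e₁-1)mP + e_jλ₂}`; the terms with `r^n`, `n ≥ 2`, have larger order because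
`e_jλ₂ > mP`. The same expansion of `∂F/∂y` has initial term `e₁ c₁^{e₁-1} t^{(e₁-1)mP}`, coming
from its constant term. These orders are `γ₂^{(j)}` and `γ₂^{(j)} - e_jλ₂`.
-/

noncomputable def pOrdQ (p : Polynomial ℂ) : WithTop ℚ :=
  WithTop.map (fun m : ℕ => (m : ℚ)) p.trailingDegree

/-- Truncated parametrization pullback on ℂ[x][y]: x ↦ t^e, y ↦ yi. -/
noncomputable def iotaP (e : ℕ) (yi : Polynomial ℂ) (g : Polynomial (Polynomial ℂ)) :
    Polynomial ℂ :=
  Polynomial.eval₂ (Polynomial.aeval (Polynomial.X ^ e : Polynomial ℂ)).toRingHom yi g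

open Polynomial

namespace Polynomial

section

variable {R : Type*} [CommRing R]

def HasInitialTerm (q : R[X]) (a : R) (d : ℕ) : Prop :=
  X ^ (d + 1) ∣ q - C a * X ^ d

namespace HasInitialTerm

variable {p q r : R[X]} {a b : R} {d e : ℕ}

theorem X_pow_dvd (h : HasInitialTerm q a d) : X ^ d ∣ q := by
  have h' : X ^ d ∣ q - C a * X ^ d := (pow_dvd_pow X d.le_succ).trans h
  simpa using dvd_add h' (dvd_mul_left (X ^ d) (C a))

theorem C_mul_X_pow_add (hr : X ^ (d + 1) ∣ r) : HasInitialTerm (C a * X ^ d + r) a d := by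
  simpa [HasInitialTerm] using hr

theorem add_of_dvd (h : HasInitialTerm p a d) (hr : X ^ (d + 1) ∣ r) :
    HasInitialTerm (p + r) a d := by
  rw [HasInitialTerm, add_sub_right_comm]
  exact dvd_add h hr

theorem mul (hp : HasInitialTerm p a d) (hq : HasInitialTerm q b e) :
    HasInitialTerm (p * q) (a * b) (d + e) := by
  have hsplit : p * q - C (a * b) * X ^ (d + e) =
      (p - C a * X ^ d) * q + X ^ d * (C a * (q - C b * X ^ e)) := by
    rw [C_mul, pow_add]; ring
  rw [HasInitialTerm, hsplit]
  refine dvd_add ?_ ?_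
  · rw [add_right_comm, pow_add]
    exact mul_dvd_mul hp hq.X_pow_dvd
  · rw [add_assoc, pow_add]
    exact mul_dvd_mul_left _ (hq.mul_left _)

theorem C_mul (h : HasInitialTerm q a d) (b : R) : HasInitialTerm (C b * q) (b * a) d := by
  simpa using (C_mul_X_pow_add (a := b) (d := 0) (dvd_zero _)).mul h

theorem pow (h : HasInitialTerm q a d) : ∀ n : ℕ, HasInitialTerm (q ^ n) (a ^ n) (n * d)
  | 0 => by simp [HasInitialTerm]
  | n + 1 => by simpa [pow_succ, add_mul] using (h.pow n).mul h

theorem expand {m : ℕ} (hm : 0 < m) (h : HasInitialTerm q a d) :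
    HasInitialTerm (expand R m q) a (m * d) := by
  have h' := _root_.map_dvd (Polynomial.expand R m) h
  simp only [map_sub, map_mul, map_pow, expand_C, expand_X, ← pow_mul] at h'
  exact (pow_dvd_pow X (by rw [mul_add]; omega)).trans h'

theorem sum {ι : Type*} {s : Finset ι} {T : ι → R[X]} {i₀ : ι} (hi₀ : i₀ ∈ s)
    (h₀ : HasInitialTerm (T i₀) a d) (h : ∀ i ∈ s, i ≠ i₀ → X ^ (d + 1) ∣ T i) :
    HasInitialTerm (∑ i ∈ s, T i) a d := by
  classical
  rw [← Finset.add_sum_erase s T hi₀]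
  exact h₀.add_of_dvd <| Finset.dvd_sum fun i hi =>
    h i (Finset.mem_of_mem_erase hi) (Finset.ne_of_mem_erase hi)

theorem trailingDegree_eq (h : HasInitialTerm q a d) (ha : a ≠ 0) :
    q.trailingDegree = d := by
  have hcoeff : q.coeff d = a := by
    have := X_pow_dvd_iff.mp h d d.lt_succ_self
    rwa [coeff_sub, coeff_C_mul_X_pow, if_pos rfl, sub_eq_zero] at this
  have hq : q ≠ 0 := by rintro rfl; exact ha (by simpa using hcoeff.symm)
  rw [trailingDegree_eq_natTrailingDegree hq, Nat.cast_inj]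
  exact le_antisymm (natTrailingDegree_le_of_ne_zero (hcoeff ▸ ha))
    (le_natTrailingDegree hq (X_pow_dvd_iff.mp h.X_pow_dvd))

end HasInitialTerm

end

theorem X_pow_dvd_eval₂_expand_mul {R : Type*} [CommSemiring R] {H : R[X][X]} {y g : R[X]}
    {a b c d : ℕ} (hy : X ^ b ∣ y) (hg : X ^ c ∣ g)
    (hH : ∀ α β, (H.coeff β).coeff α ≠ 0 → d ≤ a * α + b * β + c) :
    X ^ d ∣ H.eval₂ (expand R a : R[X] →+* R[X]) y * g := by
  rw [eval₂_eq_sum, sum_def, Finset.sum_mul]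
  refine Finset.dvd_sum fun β _ => ?_
  rw [(H.coeff β).as_sum_support_C_mul_X_pow, map_sum, Finset.sum_mul, Finset.sum_mul]
  refine Finset.dvd_sum fun α hα => ?_
  have hmono : X ^ (a * α + b * β + c) ∣ X ^ (a * α) * y ^ β * g := by
    rw [pow_add, pow_add, pow_mul, pow_mul]
    exact mul_dvd_mul (mul_dvd_mul (pow_dvd_pow_of_dvd dvd_rfl α) (pow_dvd_pow_of_dvd hy β)) hg
  have hterm := (pow_dvd_pow X (hH α β (mem_support_iff.mp hα))).trans hmono
  simpa [pow_mul, mul_assoc] using dvd_mul_of_dvd_right hterm (C ((H.coeff β).coeff α))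

theorem hasseDeriv_map {R S : Type*} [Semiring R] [Semiring S] (f : R →+* S) (n : ℕ) (H : R[X]) :
    hasseDeriv n (H.map f) = (hasseDeriv n H).map f := by
  ext k
  simp [hasseDeriv_coeff, coeff_map]

theorem eval₂_add_eq_sum_hasseDeriv {R S : Type*} [CommSemiring R] [CommSemiring S] (f : R →+* S)
    (H : R[X]) (y r : S) {N : ℕ} (hN : H.natDegree < N) :
    H.eval₂ f (y + r) = ∑ n ∈ Finset.range N, (hasseDeriv n H).eval₂ f y * r ^ n := by
  rw [← eval_map, add_comm, ← taylor_eval,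
    eval_eq_sum_range' ((natDegree_taylor _ _).trans_lt (natDegree_map_le.trans_lt hN))]
  refine Finset.sum_congr rfl fun n _ => ?_
  rw [taylor_coeff, hasseDeriv_map, eval_map]

theorem coeff_coeff_ne_zero_of_hasseDeriv {R : Type*} [Semiring R] {H : R[X][X]} {n α β : ℕ}
    (h : ((hasseDeriv n H).coeff β).coeff α ≠ 0) : (H.coeff (β + n)).coeff α ≠ 0 := by
  rw [hasseDeriv_coeff, coeff_natCast_mul] at h
  exact right_ne_zero_of_mul h

theorem coeff_coeff_ne_zero_of_derivative {R : Type*} [Semiring R] {H : R[X][X]} {α β : ℕ}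
    (h : ((derivative H).coeff β).coeff α ≠ 0) : (H.coeff (β + 1)).coeff α ≠ 0 :=
  coeff_coeff_ne_zero_of_hasseDeriv (hasseDeriv_one' H ▸ h)

theorem coeff_coeff_X_pow_add_ne_zero {R : Type*} [Semiring R] {δ : R[X][X]} {K α β : ℕ}
    (h : ((X ^ K + δ).coeff β).coeff α ≠ 0) : (α = 0 ∧ β = K) ∨ (δ.coeff β).coeff α ≠ 0 := by
  by_cases hβ : β = K
  · by_cases hα : α = 0
    · exact .inl ⟨hα, hβ⟩
    · right; simpa [hβ, coeff_one, hα] using h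
  · right; simpa [coeff_X_pow, hβ] using h

section NewtonEdge

variable {R : Type*} [CommRing R] {κ m P Q : ℕ} {δ : R[X][X]} {y r : R[X]} {c₁ c₂ : R}

theorem hasInitialTerm_derivative_eval₂_expand (hm : 0 < m) (hy : HasInitialTerm y c₁ P)
    (hδ : ∀ α β, (δ.coeff β).coeff α ≠ 0 → 0 < β → (κ + 1) * P < (κ + 1) * α + P * β) :
    HasInitialTerm ((derivative (X ^ (κ + 1) + δ)).eval₂
      (expand R ((κ + 1) * m) : R[X] →+* R[X]) (expand R m y))
      ((κ + 1) * c₁ ^ κ) (κ * (m * P)) := by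
  have hY := hy.expand hm
  have hrest : X ^ (κ * (m * P) + 1) ∣
      (derivative δ).eval₂ (expand R ((κ + 1) * m) : R[X] →+* R[X]) (expand R m y) * 1 := by
    refine X_pow_dvd_eval₂_expand_mul hY.X_pow_dvd (c := 0) (by simp) fun α β h => ?_
    have := Nat.mul_le_mul_left m (hδ α (β + 1) (coeff_coeff_ne_zero_of_derivative h) β.succ_pos)
    nlinarith
  rw [mul_one] at hrest
  rw [derivative_add, derivative_X_pow, eval₂_add, eval₂_mul, eval₂_C, eval₂_X_pow,
    add_tsub_cancel_right]
  simpa using ((hY.pow κ).C_mul ((κ + 1 : ℕ) : R)).add_of_dvd hrest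

theorem hasInitialTerm_eval₂_expand_add (hm : 0 < m) (hy : HasInitialTerm y c₁ P)
    (hr : HasInitialTerm r c₂ Q) (hQ : m * P < Q)
    (hδ : ∀ α β, (δ.coeff β).coeff α ≠ 0 → (κ + 1) * P ≤ (κ + 1) * α + P * β)
    (hδ' : ∀ α β, (δ.coeff β).coeff α ≠ 0 → 0 < β → (κ + 1) * P < (κ + 1) * α + P * β)
    (h0 : (X ^ (κ + 1) + δ).eval₂ (expand R (κ + 1) : R[X] →+* R[X]) y = 0) :
    HasInitialTerm ((X ^ (κ + 1) + δ).eval₂ (expand R ((κ + 1) * m) : R[X] →+* R[X])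
      (expand R m y + r)) ((κ + 1) * c₁ ^ κ * c₂) (κ * (m * P) + Q) := by
  set F : R[X][X] := X ^ (κ + 1) + δ
  set Ψ : R[X] →+* R[X] := (expand R ((κ + 1) * m) : R[X] →+* R[X])
  have hY := hy.expand hm
  -- any bound above the degree works; this one keeps the index `1` in range
  rw [eval₂_add_eq_sum_hasseDeriv Ψ F _ _ (N := F.natDegree + 2) (by omega)]
  refine HasInitialTerm.sum (i₀ := 1) (by simp) ?_ fun n _ hn => ?_
  · rw [hasseDeriv_one', pow_one]
    exact (hasInitialTerm_derivative_eval₂_expand hm hy hδ').mul hr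
  obtain rfl | hn2 : n = 0 ∨ 2 ≤ n := by omega
  · have hcomp : (expand R m : R[X] →+* R[X]).comp (expand R (κ + 1)) = Ψ :=
      RingHom.ext fun q => by simp [Ψ, expand_expand, mul_comm]
    have hF0 := hom_eval₂ F (expand R (κ + 1) : R[X] →+* R[X]) (expand R m : R[X] →+* R[X]) y
    rw [h0, map_zero, hcomp, RingHom.coe_coe] at hF0
    rw [hasseDeriv_zero', ← hF0, zero_mul]
    exact dvd_zero _
  refine X_pow_dvd_eval₂_expand_mul hY.X_pow_dvd
    (by rw [pow_mul]; exact pow_dvd_pow_of_dvd hr.X_pow_dvd n) fun α β h => ?_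
  have hF : (κ + 1) * P ≤ (κ + 1) * α + P * (β + n) := by
    rcases coeff_coeff_X_pow_add_ne_zero (coeff_coeff_ne_zero_of_hasseDeriv h) with ⟨rfl, hβ⟩ | h
    · rw [hβ]; nlinarith
    · exact hδ α _ h
  have := Nat.mul_le_mul_left m hF
  zify at *
  nlinarith [mul_nonneg (sub_nonneg.mpr (show (2 : ℤ) ≤ n by exact_mod_cast hn2))
    (sub_nonneg.mpr hQ.le)]

theorem hasInitialTerm_derivative_eval₂_expand_add (hm : 0 < m) (hy : HasInitialTerm y c₁ P)
    (hr : X ^ Q ∣ r) (hQ : m * P < Q)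
    (hδ : ∀ α β, (δ.coeff β).coeff α ≠ 0 → 0 < β → (κ + 1) * P < (κ + 1) * α + P * β) :
    HasInitialTerm ((derivative (X ^ (κ + 1) + δ)).eval₂
      (expand R ((κ + 1) * m) : R[X] →+* R[X]) (expand R m y + r))
      ((κ + 1) * c₁ ^ κ) (κ * (m * P)) := by
  set F' : R[X][X] := derivative (X ^ (κ + 1) + δ)
  have hY := hy.expand hm
  rw [eval₂_add_eq_sum_hasseDeriv _ F' _ _ (N := F'.natDegree + 1) (by omega)]
  refine HasInitialTerm.sum (i₀ := 0) (by simp) ?_ fun n _ hn => ?_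
  · simpa only [hasseDeriv_zero', pow_zero, mul_one] using
      hasInitialTerm_derivative_eval₂_expand hm hy hδ
  refine X_pow_dvd_eval₂_expand_mul hY.X_pow_dvd
    (by rw [pow_mul]; exact pow_dvd_pow_of_dvd hr n) fun α β h => ?_
  have hn1 : 1 ≤ n := Nat.one_le_iff_ne_zero.mpr hn
  rcases coeff_coeff_X_pow_add_ne_zero (coeff_coeff_ne_zero_of_derivative
    (coeff_coeff_ne_zero_of_hasseDeriv h)) with ⟨rfl, hβ⟩ | h
  · have : κ = β + n := by omega
    subst this
    nlinarith
  · have := Nat.mul_le_mul_left m (hδ α _ h (by omega))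
    nlinarith

end NewtonEdge

end Polynomial

theorem Nat.coprime_of_isLeast_mul_mem_zmultiples {q : ℚ} {k P : ℕ}
    (hk : IsLeast {n : ℕ | 0 < n ∧ (n : ℚ) * q ∈ AddSubgroup.zmultiples (1 : ℚ)} k)
    (hP : (k : ℚ) * q = P) : k.Coprime P := by
  obtain ⟨k', P', -, hk', hP'⟩ := Nat.exists_coprime k P
  set g := k.gcd P
  have hg : 0 < g := Nat.gcd_pos_of_pos_left _ hk.1.1
  have hk'pos : 0 < k' := Nat.pos_of_mul_pos_right (hk' ▸ hk.1.1)
  have hk'q : (k' : ℚ) * q = P' := by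
    apply mul_left_cancel₀ (show (g : ℚ) ≠ 0 by exact_mod_cast hg.ne')
    rw [← mul_assoc, mul_comm (g : ℚ), ← Nat.cast_mul, ← hk', hP, hP', Nat.cast_mul, mul_comm]
  have hle := hk.2 ⟨hk'pos, hk'q ▸ AddSubgroup.mem_zmultiples_iff.mpr ⟨P', by simp⟩⟩
  rw [hk'] at hle
  exact le_antisymm (Nat.le_of_mul_le_mul_left (by simpa using hle) hk'pos) hg

theorem lt_of_coprime_of_le {K P α β : ℕ} (hcop : K.Coprime P) (hP : 0 < P)
    (hle : K * P ≤ K * α + P * β) (hβ : 0 < β) (hne : (α, β) ≠ (0, K)) :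
    K * P < K * α + P * β := by
  refine lt_of_le_of_ne hle fun heq => hne ?_
  have hKβ : K ∣ β := hcop.dvd_of_dvd_mul_left <|
    (Nat.dvd_add_right (dvd_mul_right K α)).mp (heq ▸ dvd_mul_right K P)
  obtain ⟨t, rfl⟩ := hKβ
  have ht : 0 < t := Nat.pos_of_mul_pos_left hβ
  have hK : 0 < K := Nat.pos_of_mul_pos_right hβ
  have h1 : K * (α + P * t) = K * P := by rw [heq]; ring
  have h2 : α + P * t = P := Nat.eq_of_mul_eq_mul_left hK h1
  have ht1 : t = 1 := by nlinarith
  subst ht1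
  rw [Prod.mk.injEq]
  omega

theorem X_pow_dvd_of_comp_X_pow_eq {R : Type*} [CommSemiring R] {p q : R[X]} {n N w : ℕ}
    {μ : ℚ} (hn : n ∣ N) (hN : 0 < N) (hpq : p.comp (X ^ (N / n)) = q)
    (hq : ∀ b ∈ q.support, (N : ℚ) * μ < b) (hw : (w : ℚ) ≤ n * μ) : X ^ (w + 1) ∣ p := by
  obtain ⟨D, rfl⟩ := hn
  have hD : 0 < D := Nat.pos_of_mul_pos_left hN
  rw [Nat.mul_div_cancel_left D (Nat.pos_of_mul_pos_right hN), ← expand_eq_comp_X_pow] at hpq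
  refine X_pow_dvd_iff.mpr fun i hi => by_contra fun h => ?_
  have hlt := hq (i * D) (by rw [mem_support_iff, ← hpq, coeff_expand_mul hD]; exact h)
  have hDq : (0 : ℚ) < D := by exact_mod_cast hD
  push_cast at hlt
  have : (w : ℚ) < i := lt_of_mul_lt_mul_right (by nlinarith) hDq.le
  have : w < i := by exact_mod_cast this
  omega

theorem eq_expand_of_comp_X_pow_eq {R : Type*} [CommSemiring R] {p p' q : R[X]} {n m N : ℕ}
    (hN : 0 < N) (hnm : n * m ∣ N) (hp : p.comp (X ^ (N / n)) = q)
    (hp' : p'.comp (X ^ (N / (n * m))) = q) : p' = expand R m p := by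
  obtain ⟨D, rfl⟩ := hnm
  have hD : 0 < D := Nat.pos_of_mul_pos_left hN
  have hnm : 0 < n * m := Nat.pos_of_mul_pos_right hN
  rw [mul_assoc, Nat.mul_div_cancel_left _ (Nat.pos_of_mul_pos_right hnm),
    ← expand_eq_comp_X_pow] at hp
  rw [Nat.mul_div_cancel_left _ hnm, ← expand_eq_comp_X_pow] at hp'
  apply expand_injective hD
  rw [hp', expand_expand, mul_comm, hp]

theorem pos_of_eq_mul_pred {s : ℕ} {e kk : ℕ → ℕ} (he0 : e 0 = 1)
    (he : ∀ i, 1 ≤ i → i ≤ s → e i = kk i * e (i - 1)) (hkk : ∀ i, 1 ≤ i → i ≤ s → 0 < kk i) :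
    ∀ i ≤ s, 0 < e i
  | 0, _ => he0 ▸ one_pos
  | i + 1, hi => by
    rw [he (i + 1) i.succ_pos hi]
    exact Nat.mul_pos (hkk _ i.succ_pos hi) (pos_of_eq_mul_pred he0 he hkk i (by omega))

theorem dvd_of_eq_mul_pred {s : ℕ} {e kk : ℕ → ℕ}
    (he : ∀ i, 1 ≤ i → i ≤ s → e i = kk i * e (i - 1)) {a b : ℕ} (hab : a ≤ b) (hb : b ≤ s) :
    e a ∣ e b := by
  induction b, hab using Nat.le_induction with
  | base => rfl
  | succ b hab ih =>
    rw [he (b + 1) b.succ_pos hb, Nat.add_sub_cancel]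
    exact (ih (by omega)).mul_left _

theorem hasInitialTerm_truncation {R : Type*} [CommRing R] {s i a : ℕ} {e : ℕ → ℕ}
    {lam : ℕ → ℚ} {E : ℕ → ℕ → ℕ} {c : ℕ → R} {φ : ℕ → R[X]} {φs : ℕ → ℕ → R[X]}
    (ha : 1 ≤ a) (hai : a ≤ i) (his : i ≤ s) (hlam : StrictMonoOn lam (Set.Icc 1 s))
    (hdvd : e i ∣ e s) (hes : 0 < e s)
    (hE : ∀ ℓ, 1 ≤ ℓ → ℓ ≤ i → (E i ℓ : ℚ) = e i * lam ℓ)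
    (hφs : ∀ ℓ, 1 ≤ ℓ → ℓ ≤ i → (φs i ℓ).comp (X ^ (e s / e i)) = φ ℓ)
    (hφord : ∀ ℓ, 1 ≤ ℓ → ℓ ≤ s → ∀ b ∈ (φ ℓ).support, (e s : ℚ) * lam ℓ < b) :
    HasInitialTerm (∑ ℓ ∈ Finset.Icc a i, (C (c ℓ) * X ^ E i ℓ + φs i ℓ)) (c a) (E i a) := by
  have hei : (0 : ℚ) < e i := by exact_mod_cast Nat.pos_of_dvd_of_pos hdvd hes
  have hlamIcc : ∀ ℓ ∈ Finset.Icc a i, lam a ≤ lam ℓ := fun ℓ hℓ => by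
    rw [Finset.mem_Icc] at hℓ
    exact hlam.monotoneOn ⟨ha, by omega⟩ ⟨by omega, by omega⟩ hℓ.1
  have hφ : ∀ ℓ ∈ Finset.Icc a i, X ^ (E i a + 1) ∣ φs i ℓ := fun ℓ hℓ => by
    have hℓ' := Finset.mem_Icc.mp hℓ
    refine X_pow_dvd_of_comp_X_pow_eq hdvd hes (hφs ℓ (by omega) hℓ'.2)
      (hφord ℓ (by omega) (by omega)) ?_
    rw [hE a ha hai]
    exact mul_le_mul_of_nonneg_left (hlamIcc ℓ hℓ) hei.le
  refine HasInitialTerm.sum (i₀ := a) (by simp [hai])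
    (.C_mul_X_pow_add (hφ a (by simp [hai]))) fun ℓ hℓ hne => dvd_add ?_ (hφ ℓ hℓ)
  have hℓ' := Finset.mem_Icc.mp hℓ
  have hlt : (E i a : ℚ) < E i ℓ := by
    rw [hE a ha hai, hE ℓ (by omega) hℓ'.2]
    exact mul_lt_mul_of_pos_left (hlam ⟨ha, by omega⟩ ⟨by omega, by omega⟩
      (lt_of_le_of_ne hℓ'.1 (Ne.symm hne))) hei
  exact dvd_mul_of_dvd_right (pow_dvd_pow X (by exact_mod_cast hlt)) _

theorem support_above_newton_edge {R : Type*} [Semiring R] {lam : ℕ → ℚ} {M : ℕ → AddSubgroup ℚ}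
    {kk e : ℕ → ℕ} {E : ℕ → ℕ → ℕ} {N : Set (ℕ × ℕ)} {δ : R[X][X]} (hlam1 : 1 < lam 1)
    (hM0 : M 0 = AddSubgroup.closure ({1} ∪ lam '' Set.Icc 1 0))
    (hkk : IsLeast {m : ℕ | 0 < m ∧ (m : ℚ) * lam 1 ∈ M (1 - 1)} (kk 1)) (he1 : e 1 = kk 1)
    (hE : (E 1 1 : ℚ) = e 1 * lam 1)
    (hN : ∀ p ∈ N, (e 1 : ℚ) * (kk 1 * lam 1) ≤ kk 1 * p.1 + (kk 1 * lam 1) * p.2)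
    (hδ : ∀ α β, (δ.coeff β).coeff α ≠ 0 → (α, β) ∈ N ∧ (α, β) ≠ (0, e 1)) :
    (∀ α β, (δ.coeff β).coeff α ≠ 0 → e 1 * E 1 1 ≤ e 1 * α + E 1 1 * β) ∧
    (∀ α β, (δ.coeff β).coeff α ≠ 0 → 0 < β → e 1 * E 1 1 < e 1 * α + E 1 1 * β) := by
  have hle : ∀ α β, (δ.coeff β).coeff α ≠ 0 → e 1 * E 1 1 ≤ e 1 * α + E 1 1 * β := by
    intro α β h
    have := hN _ (hδ α β h).1
    rw [← he1, ← hE] at this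
    exact_mod_cast this
  have hcop : (e 1).Coprime (E 1 1) := by
    rw [Nat.sub_self, hM0, Set.Icc_eq_empty (by omega), Set.image_empty, Set.union_empty,
      ← AddSubgroup.zmultiples_eq_closure] at hkk
    exact he1 ▸ Nat.coprime_of_isLeast_mul_mem_zmultiples hkk (he1 ▸ hE.symm)
  have hPpos : 0 < E 1 1 := by
    have he1pos : (0 : ℚ) < e 1 := by exact_mod_cast he1 ▸ hkk.1.1
    exact_mod_cast (show (0 : ℚ) < E 1 1 by rw [hE]; exact mul_pos he1pos (by linarith))
  exact ⟨hle, fun α β h hβ => lt_of_coprime_of_le hcop hPpos (hle α β h) hβ (hδ α β h).2⟩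

theorem truncation_decomposition {R : Type*} [CommRing R] {s j m : ℕ} {lam : ℕ → ℚ}
    {e : ℕ → ℕ} {E : ℕ → ℕ → ℕ} {c : ℕ → R} {φ : ℕ → R[X]} {φs : ℕ → ℕ → R[X]} {Y : ℕ → R[X]}
    (hj2 : 2 ≤ j) (hjs : j ≤ s) (hlam_mono : ∀ i, 1 ≤ i → i < s → lam i < lam (i + 1))
    (hes : 0 < e s) (hm : e j = e 1 * m) (hej : e j ∣ e s)
    (hE : ∀ i, 1 ≤ i → i ≤ s → ∀ ℓ, 1 ≤ ℓ → ℓ ≤ i → (E i ℓ : ℚ) = e i * lam ℓ)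
    (hφs : ∀ i, 1 ≤ i → i ≤ s → ∀ ℓ, 1 ≤ ℓ → ℓ ≤ i → (φs i ℓ).comp (X ^ (e s / e i)) = φ ℓ)
    (hφord : ∀ ℓ, 1 ≤ ℓ → ℓ ≤ s → ∀ a ∈ (φ ℓ).support, (e s : ℚ) * lam ℓ < a)
    (hY : ∀ i, 1 ≤ i → i ≤ s → Y i = ∑ ℓ ∈ Finset.Icc 1 i, (C (c ℓ) * X ^ E i ℓ + φs i ℓ)) :
    ∃ r, HasInitialTerm (Y 1) (c 1) (E 1 1) ∧ Y j = expand R m (Y 1) + r ∧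
      HasInitialTerm r (c 2) (E j 2) ∧ m * E 1 1 < E j 2 := by
  have hlam : StrictMonoOn lam (Set.Icc 1 s) :=
    strictMonoOn_of_lt_add_one Set.ordConnected_Icc fun i _ hi hi' =>
      hlam_mono i hi.1 (by simp only [Set.mem_Icc] at hi'; omega)
  have hE1j : (E j 1 : ℚ) = m * E 1 1 := by
    rw [hE j (by omega) hjs 1 le_rfl (by omega), hE 1 le_rfl (by omega) 1 le_rfl le_rfl, hm]
    push_cast; ring
  have hφsj1 : φs j 1 = expand R m (φs 1 1) := by
    refine eq_expand_of_comp_X_pow_eq hes (hm ▸ hej) (hφs 1 le_rfl (by omega) 1 le_rfl le_rfl) ?_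
    rw [← hm]
    exact hφs j (by omega) hjs 1 le_rfl (by omega)
  refine ⟨∑ ℓ ∈ Finset.Icc 2 j, (C (c ℓ) * X ^ E j ℓ + φs j ℓ), ?_, ?_, ?_, ?_⟩
  · rw [hY 1 le_rfl (by omega)]
    exact hasInitialTerm_truncation le_rfl le_rfl (by omega) hlam
      ((Dvd.intro m hm.symm).trans hej) hes (hE 1 le_rfl (by omega)) (hφs 1 le_rfl (by omega)) hφord
  · rw [hY j (by omega) hjs, hY 1 le_rfl (by omega),
      ← Finset.insert_Icc_add_one_left_eq_Icc (by omega : 1 ≤ j), Finset.sum_insert (by simp),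
      Finset.Icc_self, Finset.sum_singleton, map_add, map_mul, expand_C, map_pow, expand_X,
      ← pow_mul, hφsj1, show E j 1 = m * E 1 1 by exact_mod_cast hE1j]
    rfl
  · exact hasInitialTerm_truncation (by omega) hj2 hjs hlam hej hes (hE j (by omega) hjs)
      (hφs j (by omega) hjs) hφord
  · have hej0 : (0 : ℚ) < e j := by exact_mod_cast Nat.pos_of_dvd_of_pos hej hes
    have hlt : (E j 1 : ℚ) < E j 2 := by
      rw [hE j (by omega) hjs 1 le_rfl (by omega), hE j (by omega) hjs 2 (by omega) hj2]
      exact mul_lt_mul_of_pos_left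
        (hlam ⟨le_rfl, by omega⟩ ⟨by omega, by omega⟩ one_lt_two) hej0
    rw [hE1j] at hlt
    exact_mod_cast hlt

theorem iotaP_eq_eval₂_expand (e : ℕ) (y : ℂ[X]) (g : ℂ[X][X]) :
    iotaP e y g = g.eval₂ (expand ℂ e : ℂ[X] →+* ℂ[X]) y :=
  rfl

theorem pOrdQ_eq_of_hasInitialTerm {q : ℂ[X]} {a : ℂ} {d : ℕ} (h : HasInitialTerm q a d)
    (ha : a ≠ 0) : pOrdQ q = ((d : ℚ) : WithTop ℚ) := by
  rw [pOrdQ, h.trailingDegree_eq ha]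
  rfl

theorem stmt_17_general
    (s : ℕ)
    (lam : ℕ → ℚ) (hlam1 : 1 < lam 1)
    (hlam_mono : ∀ i, 1 ≤ i → i < s → lam i < lam (i + 1))
    (M : ℕ → AddSubgroup ℚ)
    (hM : ∀ i, M i = AddSubgroup.closure ({1} ∪ lam '' Set.Icc 1 i))
    (kk : ℕ → ℕ)
    (hkk : ∀ i, 1 ≤ i → i ≤ s →
      IsLeast {m : ℕ | 0 < m ∧ (m : ℚ) * lam i ∈ M (i - 1)} (kk i))
    (e : ℕ → ℕ) (he0 : e 0 = 1)
    (he : ∀ i, 1 ≤ i → i ≤ s → e i = kk i * e (i - 1))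
    (gam : ℕ → ℕ → ℚ)
    (hgam1 : ∀ j, 1 ≤ j → j ≤ s → gam j 1 = (e j : ℚ) * lam 1)
    (hgam : ∀ j, 1 ≤ j → j ≤ s → ∀ ℓ, 1 ≤ ℓ → ℓ ≤ j - 1 →
      gam j (ℓ + 1) = (kk ℓ : ℚ) * gam j ℓ - (e j : ℚ) * lam ℓ + (e j : ℚ) * lam (ℓ + 1))
    (c : ℕ → ℂ) (hc : ∀ ℓ, 1 ≤ ℓ → ℓ ≤ s → c ℓ ≠ 0)
    (φ : ℕ → Polynomial ℂ)
    (hφord : ∀ ℓ, 1 ≤ ℓ → ℓ ≤ s → ∀ a ∈ (φ ℓ).support, (e s : ℚ) * lam ℓ < (a : ℚ))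
    (E : ℕ → ℕ → ℕ)
    (hE : ∀ i, 1 ≤ i → i ≤ s → ∀ ℓ, 1 ≤ ℓ → ℓ ≤ i → (E i ℓ : ℚ) = (e i : ℚ) * lam ℓ)
    (φs : ℕ → ℕ → Polynomial ℂ)
    (hφs : ∀ i, 1 ≤ i → i ≤ s → ∀ ℓ, 1 ≤ ℓ → ℓ ≤ i →
      (φs i ℓ).comp (Polynomial.X ^ (e s / e i)) = φ ℓ)
    (Y : ℕ → Polynomial ℂ)
    (hY : ∀ i, 1 ≤ i → i ≤ s →
      Y i = ∑ ℓ ∈ Finset.Icc 1 i, (Polynomial.C (c ℓ) * Polynomial.X ^ E i ℓ + φs i ℓ))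
    (mu : ℕ → ℚ)
    (NN : ℕ → Set (ℕ × ℕ))
    (hNN : ∀ i, 1 ≤ i → i ≤ s → NN i = {p : ℕ × ℕ |
      (e i : ℚ) * ((kk 1 : ℚ) * lam 1) ≤ (kk 1 : ℚ) * p.1 + ((kk 1 : ℚ) * lam 1) * p.2 ∧
      (e i : ℚ) * p.1 + ((e i : ℚ) * mu i) * p.2 ≤ (e i : ℚ) * ((e i : ℚ) * mu i)})
    (hs2 : 2 ≤ s) :
    ∀ δ : Polynomial (Polynomial ℂ),
      (∀ α β : ℕ, (δ.coeff β).coeff α ≠ 0 → (α, β) ∈ NN 1 ∧ (α, β) ≠ (0, e 1)) →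
      iotaP (e 1) (Y 1) (Polynomial.X ^ e 1 + δ) = 0 →
      ∀ j, 2 ≤ j → j ≤ s →
        pOrdQ (iotaP (e j) (Y j) (Polynomial.X ^ e 1 + δ)) = ((gam j 2 : ℚ) : WithTop ℚ) ∧
        pOrdQ (iotaP (e j) (Y j) (Polynomial.derivative (Polynomial.X ^ e 1 + δ))) =
          ((gam j 2 - (e j : ℚ) * lam 2 : ℚ) : WithTop ℚ) := by
  intro δ hδsupp h0 j hj2 hjs
  have hes : 0 < e s := pos_of_eq_mul_pred he0 he (fun i hi his => (hkk i hi his).1.1) s le_rfl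
  obtain ⟨m, hm⟩ := dvd_of_eq_mul_pred he (a := 1) (b := j) (by omega) hjs
  have hej : e j ∣ e s := dvd_of_eq_mul_pred he hjs le_rfl
  have hmpos : 0 < m := Nat.pos_of_mul_pos_left (hm ▸ Nat.pos_of_dvd_of_pos hej hes)
  have he1 : e 1 = kk 1 := by simpa [he0] using he 1 le_rfl (by omega)
  obtain ⟨κ, hκ⟩ : ∃ κ, e 1 = κ + 1 :=
    Nat.exists_eq_add_one.mpr (he1 ▸ (hkk 1 le_rfl (by omega)).1.1)
  have hE11 := hE 1 le_rfl (by omega) 1 le_rfl le_rfl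
  obtain ⟨hedge, hstrict⟩ := support_above_newton_edge hlam1 (hM 0) (hkk 1 le_rfl (by omega))
    he1 hE11 (fun p hp => (hNN 1 le_rfl (by omega) ▸ hp).1) hδsupp
  obtain ⟨r, hY1, hYj, hr, hQ⟩ :=
    truncation_decomposition hj2 hjs hlam_mono hes hm hej hE hφs hφord hY
  rw [hκ] at hedge hstrict h0
  have hF := hasInitialTerm_eval₂_expand_add hmpos hY1 hr hQ hedge hstrict h0
  have hF' := hasInitialTerm_derivative_eval₂_expand_add hmpos hY1 hr.X_pow_dvd hQ hstrict
  have hc1 := hc 1 le_rfl (by omega)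
  have hgam2 : gam j 2 = κ * ((m * E 1 1 : ℕ) : ℚ) + E j 2 := by
    rw [hgam j (by omega) hjs 1 le_rfl (by omega), hgam1 j (by omega) hjs, ← he1,
      hE j (by omega) hjs 2 (by omega) hj2, Nat.cast_mul, hE11, hm, hκ]
    push_cast; ring
  rw [hgam2, ← hE j (by omega) hjs 2 (by omega) hj2, iotaP_eq_eval₂_expand, iotaP_eq_eval₂_expand,
    hYj, hm, hκ, pOrdQ_eq_of_hasInitialTerm hF (mul_ne_zero (mul_ne_zero
      (Nat.cast_add_one_ne_zero κ) (pow_ne_zero _ hc1)) (hc 2 (by omega) hs2)),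
    pOrdQ_eq_of_hasInitialTerm hF' (mul_ne_zero (Nat.cast_add_one_ne_zero κ) (pow_ne_zero _ hc1))]
  constructor <;> congr 1 <;> push_cast <;> ring

theorem stmt_17
    (s : ℕ) (hs : 1 ≤ s)
    (lam : ℕ → ℚ) (hlam1 : 1 < lam 1)
    (hlam_mono : ∀ i, 1 ≤ i → i < s → lam i < lam (i + 1))
    (M : ℕ → AddSubgroup ℚ)
    (hM : ∀ i, M i = AddSubgroup.closure ({1} ∪ lam '' Set.Icc 1 i))
    (hlamM : ∀ i, 1 ≤ i → i ≤ s → lam i ∉ M (i - 1))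
    (kk : ℕ → ℕ)
    (hkk : ∀ i, 1 ≤ i → i ≤ s →
      IsLeast {m : ℕ | 0 < m ∧ (m : ℚ) * lam i ∈ M (i - 1)} (kk i))
    (e : ℕ → ℕ) (he0 : e 0 = 1)
    (he : ∀ i, 1 ≤ i → i ≤ s → e i = kk i * e (i - 1))
    (gam : ℕ → ℕ → ℚ)
    (hgam1 : ∀ j, 1 ≤ j → j ≤ s → gam j 1 = (e j : ℚ) * lam 1)
    (hgam : ∀ j, 1 ≤ j → j ≤ s → ∀ ℓ, 1 ≤ ℓ → ℓ ≤ j - 1 →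
      gam j (ℓ + 1) = (kk ℓ : ℚ) * gam j ℓ - (e j : ℚ) * lam ℓ + (e j : ℚ) * lam (ℓ + 1))
    (c : ℕ → ℂ) (hc : ∀ ℓ, 1 ≤ ℓ → ℓ ≤ s → c ℓ ≠ 0)
    (φ : ℕ → Polynomial ℂ)
    (hφ0 : ∀ ℓ, 1 ≤ ℓ → ℓ ≤ s → (φ ℓ).coeff 0 = 0)
    (hφsupp : ∀ ℓ, 1 ≤ ℓ → ℓ ≤ s → ∀ a ∈ (φ ℓ).support,
      ∃ m ∈ M ℓ, (a : ℚ) = (e s : ℚ) * m)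
    (hφord : ∀ ℓ, 1 ≤ ℓ → ℓ ≤ s → ∀ a ∈ (φ ℓ).support, (e s : ℚ) * lam ℓ < (a : ℚ))
    (hφdeg : ∀ ℓ, 1 ≤ ℓ → ℓ < s → ∀ a ∈ (φ ℓ).support, (a : ℚ) < (e s : ℚ) * lam (ℓ + 1))
    (E : ℕ → ℕ → ℕ)
    (hE : ∀ i, 1 ≤ i → i ≤ s → ∀ ℓ, 1 ≤ ℓ → ℓ ≤ i → (E i ℓ : ℚ) = (e i : ℚ) * lam ℓ)
    (φs : ℕ → ℕ → Polynomial ℂ)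
    (hφs : ∀ i, 1 ≤ i → i ≤ s → ∀ ℓ, 1 ≤ ℓ → ℓ ≤ i →
      (φs i ℓ).comp (Polynomial.X ^ (e s / e i)) = φ ℓ)
    (Y : ℕ → Polynomial ℂ)
    (hY : ∀ i, 1 ≤ i → i ≤ s →
      Y i = ∑ ℓ ∈ Finset.Icc 1 i, (Polynomial.C (c ℓ) * Polynomial.X ^ E i ℓ + φs i ℓ))
    (mu : ℕ → ℚ)
    (hmu : ∀ i, 1 ≤ i → i ≤ s →
      (φ i ≠ 0 → mu i = ((φs i i).natDegree : ℚ) / (e i : ℚ)) ∧ (φ i = 0 → mu i = lam i))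
    (NN : ℕ → Set (ℕ × ℕ))
    (hNN : ∀ i, 1 ≤ i → i ≤ s → NN i = {p : ℕ × ℕ |
      (e i : ℚ) * ((kk 1 : ℚ) * lam 1) ≤ (kk 1 : ℚ) * p.1 + ((kk 1 : ℚ) * lam 1) * p.2 ∧
      (e i : ℚ) * p.1 + ((e i : ℚ) * mu i) * p.2 ≤ (e i : ℚ) * ((e i : ℚ) * mu i)})
    (hs2 : 2 ≤ s) :
    ∀ δ : Polynomial (Polynomial ℂ),
      (∀ α β : ℕ, (δ.coeff β).coeff α ≠ 0 → (α, β) ∈ NN 1 ∧ (α, β) ≠ (0, e 1)) →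
      iotaP (e 1) (Y 1) (Polynomial.X ^ e 1 + δ) = 0 →
      ∀ j, 2 ≤ j → j ≤ s →
        pOrdQ (iotaP (e j) (Y j) (Polynomial.X ^ e 1 + δ)) = ((gam j 2 : ℚ) : WithTop ℚ) ∧
        pOrdQ (iotaP (e j) (Y j) (Polynomial.derivative (Polynomial.X ^ e 1 + δ))) =
          ((gam j 2 - (e j : ℚ) * lam 2 : ℚ) : WithTop ℚ) :=
  stmt_17_general s lam hlam1 hlam_mono M hM kk hkk e he0 he gam hgam1 hgam c hc φ hφord E hE φs hφs
    Y hY mu NN hNN hs2
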